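/- Consider the noiseless MABS mixture G = ΠAω ∈ R^{n×M}, where Π is a selection matrix, A ∈ 𝔄^{k^m × m} lists all alphabet combinations, and ω ∈ Ω_{m,M} with min(ASB(ω), WSB(ω)) ≥ δ and Π A contains all unit vectors e^1,…,e^m among its rows (separability); the same for (ω', Π'). If max_{1≤j≤n} ‖(ΠAω)_{j·} − (Π'Aω')_{j·}‖ < ε for some 0 < ε < √M·δ/(1 + m·a_k), then (a) max_{1≤i≤m} ‖ω_{i·} − ω'_{i·}‖ < ε, and (b) Π = Π'. -/
import Mathlib


open Finset Real

namespace MABS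

/-- Euclidean norm of a vector in `ℝ^M`. -/
noncomputable def vnorm {M : ℕ} (v : Fin M → ℝ) : ℝ := Real.sqrt (∑ j, (v j) ^ 2)

/-- Euclidean norm of the `i`-th row of the mixing matrix `ω`. -/
noncomputable def rowNorm {m M : ℕ} (ω : Fin m → Fin M → ℝ) (i : Fin m) : ℝ := vnorm (ω i)

/-- `e` has all its entries in the alphabet `𝔄`. -/
def inAlph (𝔄 : Finset ℝ) {m : ℕ} (e : Fin m → ℝ) : Prop := ∀ i, e i ∈ 𝔄

/-- The mixture `e ω ∈ ℝ^M` of the rows of `ω` with coefficients `e`. -/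
noncomputable def mix {m M : ℕ} (e : Fin m → ℝ) (ω : Fin m → Fin M → ℝ) : Fin M → ℝ :=
  fun j => ∑ i, e i * ω i j

/-- Alphabet separation boundary `ASB(ω) = min_{e ≠ e' ∈ 𝔄^m} ‖eω - e'ω‖ / √M`. -/
noncomputable def ASB (𝔄 : Finset ℝ) {m M : ℕ} (ω : Fin m → Fin M → ℝ) : ℝ :=
  sInf {x : ℝ | ∃ e e' : Fin m → ℝ, inAlph 𝔄 e ∧ inAlph 𝔄 e' ∧ e ≠ e' ∧
    x = vnorm (mix e ω - mix e' ω) / Real.sqrt (M : ℝ)}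

/-- `WSB(ω) ≥ δ`, i.e. every consecutive row-norm gap is at least `2δ√M/(1+m·a_k)`. -/
def WSBge (ak δ : ℝ) {m M : ℕ} (ω : Fin m → Fin M → ℝ) : Prop :=
  ∀ i j : Fin m, (j : ℕ) = (i : ℕ) + 1 →
    δ ≤ ((1 + (m : ℝ) * ak) / (2 * Real.sqrt (M : ℝ))) * (rowNorm ω j - rowNorm ω i)

/-- Weights separation boundary as a real number. -/
noncomputable def WSBval (ak : ℝ) {m M : ℕ} (ω : Fin m → Fin M → ℝ) : ℝ :=
  ((1 + (m : ℝ) * ak) / (2 * Real.sqrt (M : ℝ))) *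
    sInf {x : ℝ | ∃ i j : Fin m, (j : ℕ) = (i : ℕ) + 1 ∧ x = rowNorm ω j - rowNorm ω i}

/-- `ω ∈ Ω_{m,M}`: nonnegative entries, columns summing to one, strictly increasing
positive row norms. -/
def Omega {m M : ℕ} (ω : Fin m → Fin M → ℝ) : Prop :=
  (∀ i j, 0 ≤ ω i j) ∧ (∀ j, ∑ i, ω i j = 1) ∧
    (∀ i, 0 < rowNorm ω i) ∧ StrictMono (rowNorm ω)

/-- The alphabet `𝔄 = {0, 1, a₃, …, a_k}` with `1 < a₃ < … < a_k`: it contains `0` and `1`,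
`ak` is its maximal element, and every nonzero element is at least `1`. -/
def AlphOK (𝔄 : Finset ℝ) (ak : ℝ) : Prop :=
  (0 : ℝ) ∈ 𝔄 ∧ (1 : ℝ) ∈ 𝔄 ∧ ak ∈ 𝔄 ∧ (∀ x ∈ 𝔄, x ≤ ak) ∧ (∀ x ∈ 𝔄, x = 0 ∨ 1 ≤ x)

/-- `Δ𝔄_min`, the minimal distance between distinct alphabet values. -/
noncomputable def DeltaMin (𝔄 : Finset ℝ) : ℝ :=
  sInf {x : ℝ | ∃ a ∈ 𝔄, ∃ b ∈ 𝔄, a ≠ b ∧ x = |a - b|}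

/-- The `i`-th standard unit (row) vector in `ℝ^m`. -/
def unitRow {m : ℕ} (i : Fin m) : Fin m → ℝ := fun i' => if i' = i then 1 else 0

/-- `F = ΠA` is a separable finite-alphabet design: every row lies in `𝔄^m` and every
standard unit vector occurs among the rows. -/
def Separable (𝔄 : Finset ℝ) {n m : ℕ} (F : Fin n → Fin m → ℝ) : Prop :=
  (∀ j, inAlph 𝔄 (F j)) ∧ ∀ i : Fin m, ∃ j, F j = unitRow i

end MABS

namespace MABS

/-- The identity linear equivalence to Euclidean space. -/
noncomputable def toE {M : ℕ} : (Fin M → ℝ) ≃ₗ[ℝ] EuclideanSpace ℝ (Fin M) :=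
  (WithLp.linearEquiv 2 ℝ (Fin M → ℝ)).symm

lemma vnorm_nonneg {M : ℕ} (v : Fin M → ℝ) : 0 ≤ vnorm v := Real.sqrt_nonneg _

lemma vnorm_eq_norm {M : ℕ} (v : Fin M → ℝ) : vnorm v = ‖toE v‖ := by
  rw [EuclideanSpace.norm_eq]
  unfold vnorm
  congr 1
  refine Finset.sum_congr rfl fun j _ => ?_
  rw [Real.norm_eq_abs, sq_abs]
  rfl

lemma vnorm_add_le {M : ℕ} (u v : Fin M → ℝ) : vnorm (u + v) ≤ vnorm u + vnorm v := by
  rw [vnorm_eq_norm, vnorm_eq_norm, vnorm_eq_norm, map_add]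
  exact norm_add_le _ _

lemma vnorm_sub_comm {M : ℕ} (u v : Fin M → ℝ) : vnorm (u - v) = vnorm (v - u) := by
  rw [vnorm_eq_norm, vnorm_eq_norm, map_sub, map_sub]
  exact norm_sub_rev _ _

lemma vnorm_mono {M : ℕ} {u w : Fin M → ℝ} (h0 : ∀ j, 0 ≤ u j) (h : ∀ j, u j ≤ w j) :
    vnorm u ≤ vnorm w := by
  unfold vnorm
  apply Real.sqrt_le_sqrt
  exact Finset.sum_le_sum fun j _ => pow_le_pow_left₀ (h0 j) (h j) 2

lemma mix_unitRow {m M : ℕ} (i : Fin m) (ω : Fin m → Fin M → ℝ) :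
    mix (unitRow i) ω = ω i := by
  funext j
  unfold mix unitRow
  simp

lemma mix_sub_le {m M : ℕ} (g : Fin m → ℝ) (hg : ∀ l, 0 ≤ g l)
    (A B : Fin m → Fin M → ℝ) :
    vnorm (mix g A - mix g B) ≤ ∑ l, g l * vnorm (A l - B l) := by
  have hfun : mix g A - mix g B = ∑ l, g l • (A l - B l) := by
    funext j
    simp [mix, Finset.sum_apply, mul_sub, Finset.sum_sub_distrib]
  rw [hfun, vnorm_eq_norm, map_sum]
  calc ‖∑ l, toE (g l • (A l - B l))‖ ≤ ∑ l, ‖toE (g l • (A l - B l))‖ :=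
        norm_sum_le _ _
    _ = ∑ l, g l * vnorm (A l - B l) := by
        refine Finset.sum_congr rfl fun l _ => ?_
        rw [map_smul, norm_smul, Real.norm_eq_abs, abs_of_nonneg (hg l), vnorm_eq_norm]

lemma asb_pair {m M : ℕ} (hM : 0 < M) {𝔄 : Finset ℝ} {δ : ℝ} {ω : Fin m → Fin M → ℝ}
    (h : δ ≤ ASB 𝔄 ω) {e e' : Fin m → ℝ} (he : inAlph 𝔄 e)
    (he' : inAlph 𝔄 e') (hne : e ≠ e') :
    Real.sqrt (M : ℝ) * δ ≤ vnorm (mix e ω - mix e' ω) := by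
  have hs : (0:ℝ) < Real.sqrt (M : ℝ) := Real.sqrt_pos.2 (by exact_mod_cast hM)
  unfold ASB at h
  have hbdd : BddBelow {x : ℝ | ∃ e e' : Fin m → ℝ, inAlph 𝔄 e ∧ inAlph 𝔄 e' ∧ e ≠ e' ∧
      x = vnorm (mix e ω - mix e' ω) / Real.sqrt (M : ℝ)} := by
    refine ⟨0, ?_⟩
    rintro x ⟨a, b, -, -, -, rfl⟩
    exact div_nonneg (vnorm_nonneg _) (Real.sqrt_nonneg _)
  have hmem : vnorm (mix e ω - mix e' ω) / Real.sqrt (M : ℝ) ∈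
      {x : ℝ | ∃ e e' : Fin m → ℝ, inAlph 𝔄 e ∧ inAlph 𝔄 e' ∧ e ≠ e' ∧
      x = vnorm (mix e ω - mix e' ω) / Real.sqrt (M : ℝ)} :=
    ⟨e, e', he, he', hne, rfl⟩
  have h3 : δ ≤ vnorm (mix e ω - mix e' ω) / Real.sqrt (M : ℝ) :=
    h.trans (csInf_le hbdd hmem)
  rw [le_div_iff₀ hs] at h3
  linarith [h3]

lemma gap_lemma {m M : ℕ} {ak δ ε : ℝ} (hsM0 : 0 < Real.sqrt (M : ℝ))
    (hmak : 1 ≤ (m:ℝ) * ak) (hε : 0 < ε)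
    (hMδε : (1 + (m:ℝ) * ak) * ε < Real.sqrt (M : ℝ) * δ)
    {ω₀ : Fin m → Fin M → ℝ} (hmono : Monotone (rowNorm ω₀))
    (hw : WSBge ak δ ω₀) {i t : Fin m} (hlt : (i : ℕ) < (t : ℕ)) :
    rowNorm ω₀ i + 2 * ε < rowNorm ω₀ t := by
  have hi1 : (i:ℕ) + 1 < m := lt_of_le_of_lt hlt t.isLt
  set i1 : Fin m := ⟨(i:ℕ) + 1, hi1⟩ with hi1def
  have hw1 := hw i i1 rfl
  have hpos : (0:ℝ) < 1 + (m:ℝ) * ak := by linarith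
  have hsM : (0:ℝ) < 2 * Real.sqrt (M : ℝ) := by linarith [hsM0]
  have h2 : δ * (2 * Real.sqrt (M : ℝ)) ≤
      (1 + (m:ℝ) * ak) * (rowNorm ω₀ i1 - rowNorm ω₀ i) := by
    rw [div_mul_eq_mul_div, le_div_iff₀ hsM] at hw1
    linarith
  have h3 : 2 * ε < rowNorm ω₀ i1 - rowNorm ω₀ i := by
    have hq : (1 + (m:ℝ) * ak) * (2 * ε) < (1 + (m:ℝ) * ak) *
        (rowNorm ω₀ i1 - rowNorm ω₀ i) := by nlinarith
    exact lt_of_mul_lt_mul_left hq hpos.le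
  have h1t : rowNorm ω₀ i1 ≤ rowNorm ω₀ t := hmono (Fin.le_def.mpr hlt)
  linarith

end MABS

open MABS

/-- **stable and exact recovery.** Let `(ω, F)` and `(ω', F')` both be
`δ`-separable MABS parameters (rows of `F, F'` in `𝔄^m`, containing all unit vectors;
`ω, ω' ∈ Ω_{m,M}` with `ASB, WSB ≥ δ`). If every row of the two noiseless mixtures is
`ε`-close for some `0 < ε < √M·δ/(1 + m·a_k)`, then all rows of the weights are `ε`-close
and the designs coincide. -/
theorem stmt9 {n m M : ℕ} (hm : 0 < m) (hM : 0 < M) (𝔄 : Finset ℝ) (ak δ ε : ℝ)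
    (hA : MABS.AlphOK 𝔄 ak) (hδ : 0 < δ) (hε : 0 < ε)
    (hεδ : ε < Real.sqrt (M : ℝ) * δ / (1 + (m : ℝ) * ak))
    (F F' : Fin n → Fin m → ℝ) (hF : MABS.Separable 𝔄 F) (hF' : MABS.Separable 𝔄 F')
    (ω ω' : Fin m → Fin M → ℝ) (hΩ : MABS.Omega ω) (hΩ' : MABS.Omega ω')
    (hasb : δ ≤ MABS.ASB 𝔄 ω) (hasb' : δ ≤ MABS.ASB 𝔄 ω')
    (hwsb : MABS.WSBge ak δ ω) (hwsb' : MABS.WSBge ak δ ω')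
    (hclose : ∀ j : Fin n, MABS.vnorm (MABS.mix (F j) ω - MABS.mix (F' j) ω') < ε) :
    (∀ i : Fin m, MABS.vnorm (ω i - ω' i) < ε) ∧ F = F' := by
  obtain ⟨h0A, h1A, hakA, hle_ak, hzero_one⟩ := hA
  have hak1 : (1:ℝ) ≤ ak := hle_ak 1 h1A
  have hm1 : (1:ℝ) ≤ (m:ℝ) := by exact_mod_cast hm
  have hmak : (1:ℝ) ≤ (m:ℝ) * ak := by nlinarith
  have hpos1 : (0:ℝ) < 1 + (m:ℝ) * ak := by linarith
  have hsM0 : (0:ℝ) < Real.sqrt (M : ℝ) := Real.sqrt_pos.2 (by exact_mod_cast hM)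
  have hMδε : (1 + (m:ℝ) * ak) * ε < Real.sqrt (M : ℝ) * δ := by
    rw [lt_div_iff₀ hpos1] at hεδ
    linarith
  have halph_nonneg : ∀ x ∈ 𝔄, (0:ℝ) ≤ x := by
    intro x hx
    rcases hzero_one x hx with h | h
    · exact h.ge
    · linarith
  have halph_one : ∀ x ∈ 𝔄, x ≠ 0 → (1:ℝ) ≤ x := by
    intro x hx hx0
    rcases hzero_one x hx with h | h
    · exact absurd h hx0
    · exact h
  have hunit : ∀ i : Fin m, MABS.inAlph 𝔄 (MABS.unitRow i) := by
    intro i i'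
    unfold MABS.unitRow
    by_cases h : i' = i <;> simp [h, h0A, h1A]
  -- uniform bound on the ω/ω' mixture difference with fixed coefficients
  have bound : ∀ g : Fin m → ℝ, MABS.inAlph 𝔄 g →
      (∀ l, g l ≠ 0 → MABS.vnorm (ω l - ω' l) < ε) →
      MABS.vnorm (MABS.mix g ω - MABS.mix g ω') ≤ (m:ℝ) * ak * ε := by
    intro g hg hcl
    have hg0 : ∀ l, 0 ≤ g l := fun l => halph_nonneg _ (hg l)
    calc MABS.vnorm (MABS.mix g ω - MABS.mix g ω')
        ≤ ∑ l, g l * MABS.vnorm (ω l - ω' l) := mix_sub_le g hg0 ω ω'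
      _ ≤ ∑ _l : Fin m, ak * ε := by
          refine Finset.sum_le_sum fun l _ => ?_
          by_cases h : g l = 0
          · rw [h, zero_mul]
            positivity
          · exact mul_le_mul (hle_ak _ (hg l)) (le_of_lt (hcl l h)) (vnorm_nonneg _)
              (by linarith)
      _ = (m:ℝ) * ak * ε := by
          rw [Finset.sum_const, Finset.card_univ, Fintype.card_fin, nsmul_eq_mul]
          ring
  have main : ∀ N : ℕ, ∀ i : Fin m, (i : ℕ) = N → MABS.vnorm (ω i - ω' i) < ε := by
    intro N
    induction N using Nat.strong_induction_on with
    | _ N IH =>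
      intro i hiN
      have IH' : ∀ s : Fin m, (s : ℕ) < (i : ℕ) → MABS.vnorm (ω s - ω' s) < ε := by
        intro s hs
        rw [hiN] at hs
        exact IH s hs s rfl
      obtain ⟨j, hj⟩ := hF.2 i
      obtain ⟨j', hj'⟩ := hF'.2 i
      set f : Fin m → ℝ := F j' with hfdef
      set e : Fin m → ℝ := F' j with hedef
      have hfalph : MABS.inAlph 𝔄 f := hF.1 j'
      have healph : MABS.inAlph 𝔄 e := hF'.1 j
      have h1 : MABS.vnorm (ω i - MABS.mix e ω') < ε := by
        have := hclose j
        rwa [hj, mix_unitRow] at this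
      have h2 : MABS.vnorm (MABS.mix f ω - ω' i) < ε := by
        have := hclose j'
        rwa [hj', mix_unitRow] at this
      -- top nonzero index of f is ≥ i
      have hfex : ∃ l : Fin m, (i : ℕ) ≤ (l : ℕ) ∧ f l ≠ 0 := by
        by_contra hcon
        push_neg at hcon
        have hfne : f ≠ MABS.unitRow i := by
          intro heq
          have h1' : f i = 1 := by rw [heq]; simp [MABS.unitRow]
          rw [hcon i le_rfl] at h1'
          norm_num at h1'
        have hsep := asb_pair hM hasb' hfalph (hunit i) hfne
        rw [mix_unitRow] at hsep
        have hb := bound f hfalph (fun l hl => IH' l (by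
          by_contra hge
          exact hl (hcon l (le_of_not_gt hge))))
        have htri : MABS.vnorm (MABS.mix f ω' - ω' i) ≤
            MABS.vnorm (MABS.mix f ω' - MABS.mix f ω) + MABS.vnorm (MABS.mix f ω - ω' i) := by
          have h := vnorm_add_le (MABS.mix f ω' - MABS.mix f ω) (MABS.mix f ω - ω' i)
          have hcanc : (MABS.mix f ω' - MABS.mix f ω) + (MABS.mix f ω - ω' i)
              = MABS.mix f ω' - ω' i := by abel
          rwa [hcanc] at h
        rw [vnorm_sub_comm (MABS.mix f ω') (MABS.mix f ω)] at htri
        linarith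
      -- top nonzero index of e is ≥ i
      have heex : ∃ l : Fin m, (i : ℕ) ≤ (l : ℕ) ∧ e l ≠ 0 := by
        by_contra hcon
        push_neg at hcon
        have hene : e ≠ MABS.unitRow i := by
          intro heq
          have h1' : e i = 1 := by rw [heq]; simp [MABS.unitRow]
          rw [hcon i le_rfl] at h1'
          norm_num at h1'
        have hsep := asb_pair hM hasb healph (hunit i) hene
        rw [mix_unitRow] at hsep
        have hb := bound e healph (fun l hl => IH' l (by
          by_contra hge
          exact hl (hcon l (le_of_not_gt hge))))
        have htri : MABS.vnorm (MABS.mix e ω - ω i) ≤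
            MABS.vnorm (MABS.mix e ω - MABS.mix e ω') + MABS.vnorm (MABS.mix e ω' - ω i) := by
          have h := vnorm_add_le (MABS.mix e ω - MABS.mix e ω') (MABS.mix e ω' - ω i)
          have hcanc : (MABS.mix e ω - MABS.mix e ω') + (MABS.mix e ω' - ω i)
              = MABS.mix e ω - ω i := by abel
          rwa [hcanc] at h
        rw [vnorm_sub_comm (MABS.mix e ω') (ω i)] at htri
        linarith
      -- witnesses of large nonzero indices
      obtain ⟨t, hti, hft⟩ := hfex
      obtain ⟨u, hui, heu⟩ := heex
      -- norm bounds on the mixtures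
      have hmixf_ge : MABS.rowNorm ω t ≤ MABS.vnorm (MABS.mix f ω) := by
        refine vnorm_mono (fun jj => hΩ.1 t jj) (fun jj => ?_)
        have hft1 : (1:ℝ) ≤ f t := halph_one _ (hfalph t) hft
        calc ω t jj ≤ f t * ω t jj := le_mul_of_one_le_left (hΩ.1 t jj) hft1
          _ ≤ ∑ l, f l * ω l jj := Finset.single_le_sum
              (fun l _ => mul_nonneg (halph_nonneg _ (hfalph l)) (hΩ.1 l jj))
              (Finset.mem_univ t)
      have hmixe_ge : MABS.rowNorm ω' u ≤ MABS.vnorm (MABS.mix e ω') := by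
        refine vnorm_mono (fun jj => hΩ'.1 u jj) (fun jj => ?_)
        have heu1 : (1:ℝ) ≤ e u := halph_one _ (healph u) heu
        calc ω' u jj ≤ e u * ω' u jj := le_mul_of_one_le_left (hΩ'.1 u jj) heu1
          _ ≤ ∑ l, e l * ω' l jj := Finset.single_le_sum
              (fun l _ => mul_nonneg (halph_nonneg _ (healph l)) (hΩ'.1 l jj))
              (Finset.mem_univ u)
      have hmixf_lt : MABS.vnorm (MABS.mix f ω) < MABS.rowNorm ω' i + ε := by
        have h := vnorm_add_le (MABS.mix f ω - ω' i) (ω' i)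
        have hcanc : (MABS.mix f ω - ω' i) + ω' i = MABS.mix f ω := by abel
        rw [hcanc] at h
        have : MABS.vnorm (ω' i) = MABS.rowNorm ω' i := rfl
        linarith
      have hmixe_lt : MABS.vnorm (MABS.mix e ω') < MABS.rowNorm ω i + ε := by
        have h := vnorm_add_le (MABS.mix e ω' - ω i) (ω i)
        have hcanc : (MABS.mix e ω' - ω i) + ω i = MABS.mix e ω' := by abel
        rw [hcanc] at h
        have hc : MABS.vnorm (MABS.mix e ω' - ω i) = MABS.vnorm (ω i - MABS.mix e ω') :=
          vnorm_sub_comm _ _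
        have : MABS.vnorm (ω i) = MABS.rowNorm ω i := rfl
        linarith
      -- the top indices are exactly i
      have hts : (t : ℕ) = (i : ℕ) := by
        rcases lt_or_eq_of_le hti with hlt | heq
        · exfalso
          have g1 := gap_lemma hsM0 hmak hε hMδε hΩ.2.2.2.monotone hwsb hlt
          have m1 : MABS.rowNorm ω' i ≤ MABS.rowNorm ω' u :=
            hΩ'.2.2.2.monotone (Fin.le_def.mpr hui)
          linarith
        · exact heq.symm
      have hus : (u : ℕ) = (i : ℕ) := by
        rcases lt_or_eq_of_le hui with hlt | heq
        · exfalso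
          have g1 := gap_lemma hsM0 hmak hε hMδε hΩ'.2.2.2.monotone hwsb' hlt
          have m1 : MABS.rowNorm ω i ≤ MABS.rowNorm ω t :=
            hΩ.2.2.2.monotone (Fin.le_def.mpr hti)
          linarith
        · exact heq.symm
      have htEq : t = i := Fin.ext hts
      have huEq : u = i := Fin.ext hus
      have hfi : f i ≠ 0 := htEq ▸ hft
      have hei : e i ≠ 0 := huEq ▸ heu
      have hfi1 : (1:ℝ) ≤ f i := halph_one _ (hfalph i) hfi
      have hei1 : (1:ℝ) ≤ e i := halph_one _ (healph i) hei
      -- pointwise domination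
      have hq : ∀ jj, ω i jj ≤ MABS.mix f ω jj := by
        intro jj
        calc ω i jj ≤ f i * ω i jj := le_mul_of_one_le_left (hΩ.1 i jj) hfi1
          _ ≤ ∑ l, f l * ω l jj := Finset.single_le_sum
              (fun l _ => mul_nonneg (halph_nonneg _ (hfalph l)) (hΩ.1 l jj))
              (Finset.mem_univ i)
      have hq' : ∀ jj, ω' i jj ≤ MABS.mix e ω' jj := by
        intro jj
        calc ω' i jj ≤ e i * ω' i jj := le_mul_of_one_le_left (hΩ'.1 i jj) hei1
          _ ≤ ∑ l, e l * ω' l jj := Finset.single_le_sum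
              (fun l _ => mul_nonneg (halph_nonneg _ (healph l)) (hΩ'.1 l jj))
              (Finset.mem_univ i)
      -- sum of the two nonnegative residuals is small
      have hsum : MABS.vnorm ((MABS.mix f ω - ω i) + (MABS.mix e ω' - ω' i)) < 2 * ε := by
        have e1 : (MABS.mix f ω - ω i) + (MABS.mix e ω' - ω' i)
            = (MABS.mix f ω - ω' i) + (MABS.mix e ω' - ω i) := by abel
        rw [e1]
        have h := vnorm_add_le (MABS.mix f ω - ω' i) (MABS.mix e ω' - ω i)
        have hc : MABS.vnorm (MABS.mix e ω' - ω i) = MABS.vnorm (ω i - MABS.mix e ω') :=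
          vnorm_sub_comm _ _
        linarith
      have h2e : 2 * ε ≤ (1 + (m:ℝ) * ak) * ε := by nlinarith
      -- e must be the unit row
      have he_is : e = MABS.unitRow i := by
        by_contra hne
        have hsep := asb_pair hM hasb' healph (hunit i) hne
        rw [mix_unitRow] at hsep
        have hmono2 : MABS.vnorm (MABS.mix e ω' - ω' i) ≤
            MABS.vnorm ((MABS.mix f ω - ω i) + (MABS.mix e ω' - ω' i)) := by
          apply vnorm_mono
          · intro jj
            have := hq' jj
            simp only [Pi.sub_apply]
            linarith
          · intro jj
            have := hq jj
            simp only [Pi.add_apply, Pi.sub_apply]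
            linarith
        linarith
      rw [he_is, mix_unitRow] at h1
      exact h1
  have ha : ∀ i : Fin m, MABS.vnorm (ω i - ω' i) < ε := fun i => main (i : ℕ) i rfl
  refine ⟨ha, ?_⟩
  funext jj
  by_contra hne
  have hsep := asb_pair hM hasb (hF.1 jj) (hF'.1 jj) hne
  have hb := bound (F' jj) (hF'.1 jj) (fun l _ => ha l)
  have htri : MABS.vnorm (MABS.mix (F jj) ω - MABS.mix (F' jj) ω) ≤
      MABS.vnorm (MABS.mix (F jj) ω - MABS.mix (F' jj) ω')
        + MABS.vnorm (MABS.mix (F' jj) ω' - MABS.mix (F' jj) ω) := by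
    have h := vnorm_add_le (MABS.mix (F jj) ω - MABS.mix (F' jj) ω')
      (MABS.mix (F' jj) ω' - MABS.mix (F' jj) ω)
    have hcanc : (MABS.mix (F jj) ω - MABS.mix (F' jj) ω')
        + (MABS.mix (F' jj) ω' - MABS.mix (F' jj) ω)
        = MABS.mix (F jj) ω - MABS.mix (F' jj) ω := by abel
    rwa [hcanc] at h
  rw [vnorm_sub_comm (MABS.mix (F' jj) ω') (MABS.mix (F' jj) ω)] at htri
  linarith [hclose jj]
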